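/- arXiv:1809.09418 — 2 statements merged into one kernel-verified Lean document; each statement's English description precedes it below -/
import Mathlib

section
/- Let A be a finite two-sided skew brace. If the additive group A_⊕ is solvable, then the multiplicative group A_⊙ is solvable. -/
/-!
Induct on `|A|`. For a two-sided skew brace the maps `λ_a : b ↦ -a + ab`, `ρ_c : a ↦ ac - c`
and the additive conjugations are automorphisms of `A_⊕`, so every characteristic subgroup `N`
of `A_⊕` is an ideal. Then `N` and `A / N` are smaller two-sided skew braces with solvable
additive groups, and `A_⊙` is an extension of `(A / N)_⊙` by `N_⊙`. If `A_⊕` has no proper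
nontrivial characteristic subgroup, its derived subgroup is trivial and then its (normal, hence
characteristic) Sylow subgroups show that `A_⊕` is a `p`-group; so `|A_⊙| = p ^ n` and `A_⊙`
is nilpotent.
-/

section GroupTheory

open Subgroup

variable {G : Type*} [Group G] [Finite G] [Nontrivial G]

theorem exists_characteristic_ne_bot_ne_top_or_isPGroup_of_isMulCommutative
    [IsMulCommutative G] :
    (∃ H : Subgroup G, H.Characteristic ∧ H ≠ ⊥ ∧ H ≠ ⊤) ∨ ∃ p, p.Prime ∧ IsPGroup p G := by
  obtain ⟨p, hp, hdvd⟩ := Nat.exists_prime_and_dvd (Finite.one_lt_card (α := G)).ne'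
  have := Fact.mk hp
  let P : Sylow p G := default
  by_cases htop : (P : Subgroup G) = ⊤
  · exact .inr ⟨p, hp, P.isPGroup'.of_equiv ((MulEquiv.subgroupCongr htop).trans topEquiv)⟩
  · exact .inl
      ⟨P, P.characteristic_of_normal inferInstance, P.ne_bot_of_dvd_card hdvd, htop⟩

theorem Group.IsSolvable.exists_characteristic_ne_bot_ne_top_or_isPGroup
    [Group.IsSolvable G] :
    (∃ H : Subgroup G, H.Characteristic ∧ H ≠ ⊥ ∧ H ≠ ⊤) ∨ ∃ p, p.Prime ∧ IsPGroup p G := by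
  by_cases hcomm : commutator G = ⊥
  · have := (commutator_eq_bot_iff G).mp hcomm
    exact exists_characteristic_ne_bot_ne_top_or_isPGroup_of_isMulCommutative
  · exact .inl ⟨commutator G, inferInstance, hcomm,
      (IsSolvable.commutator_lt_top_of_nontrivial G).ne⟩

end GroupTheory

instance AddSubgroup.isSolvable_multiplicative {A : Type*} [AddGroup A]
    [Group.IsSolvable (Multiplicative A)] (N : AddSubgroup A) :
    Group.IsSolvable (Multiplicative N) :=
  Group.isSolvable_of_isSolvable_injective (f := N.subtype.toMultiplicative) Subtype.val_injective

instance QuotientAddGroup.isSolvable_multiplicative {A : Type*} [AddGroup A]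
    [Group.IsSolvable (Multiplicative A)] (N : AddSubgroup A) [N.Normal] :
    Group.IsSolvable (Multiplicative (A ⧸ N)) :=
  Group.isSolvable_of_surjective (f := (QuotientAddGroup.mk' N).toMultiplicative)
    (QuotientAddGroup.mk'_surjective N)

theorem AddSubgroup.card_lt_card_of_ne_top {A : Type*} [AddGroup A] [Finite A]
    {N : AddSubgroup A} (h : N ≠ ⊤) : Nat.card N < Nat.card A := by
  rw [← N.index_mul_card]
  exact lt_mul_of_one_lt_left Nat.card_pos (N.one_lt_index_of_ne_top h)

theorem QuotientAddGroup.card_lt_card_of_ne_bot {A : Type*} [AddGroup A] [Finite A]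
    {N : AddSubgroup A} [N.Normal] (h : N ≠ ⊥) : Nat.card (A ⧸ N) < Nat.card A := by
  rw [← N.index_eq_card, ← N.index_mul_card]
  exact lt_mul_of_one_lt_right (Nat.pos_of_ne_zero N.index_ne_zero_of_finite)
    (N.one_lt_card_iff_ne_bot.mpr h)

class IsSkewBrace (A : Type*) [AddGroup A] [Group A] : Prop where
  mul_add (a b c : A) : a * (b + c) = a * b + -a + a * c

class IsTwoSidedSkewBrace (A : Type*) [AddGroup A] [Group A] : Prop extends IsSkewBrace A where
  add_mul (a b c : A) : (a + b) * c = a * c + -c + b * c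

namespace SkewBrace

variable {A : Type*} [AddGroup A] [Group A]

section Left

variable [IsSkewBrace A]

theorem one_eq_zero : (1 : A) = 0 := by
  simpa [eq_comm] using IsSkewBrace.mul_add (1 : A) 0 0

@[simps]
def lambda (a : A) : A ≃+ A where
  toFun b := -a + a * b
  invFun b := a⁻¹ * (a + b)
  left_inv b := by simp
  right_inv b := by simp
  map_add' b c := by simp [IsSkewBrace.mul_add, add_assoc]

end Left

@[simps]
def rho [IsTwoSidedSkewBrace A] (c : A) : A ≃+ A where
  toFun a := a * c + -c
  invFun a := (a + c) * c⁻¹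
  left_inv a := by simp
  right_inv a := by simp
  map_add' a b := by simp [IsTwoSidedSkewBrace.add_mul, add_assoc]

class IsLeftIdeal (N : AddSubgroup A) : Prop where
  neg_add_mul_mem (a : A) {n : A} : n ∈ N → -a + a * n ∈ N

/-- Given the other conditions, `mul_add_neg_mem` is equivalent to normality of `N` in `A_⊙`. -/
class IsIdeal (N : AddSubgroup A) : Prop extends N.Normal, IsLeftIdeal N where
  mul_add_neg_mem (c : A) {n : A} : n ∈ N → n * c + -c ∈ N

instance isIdeal_toAddSubgroup' [IsTwoSidedSkewBrace A] (H : Subgroup (Multiplicative A))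
    [hH : H.Characteristic] : IsIdeal H.toAddSubgroup' := by
  have map_mem (φ : A ≃+ A) {n : A} (hn : n ∈ H.toAddSubgroup') : φ n ∈ H.toAddSubgroup' :=
    Subgroup.characteristic_iff_le_comap.mp hH φ.toMultiplicative hn
  exact
    { conj_mem n hn g := (Subgroup.normal_of_characteristic H).conj_mem _ hn (.ofAdd g)
      neg_add_mul_mem a _ hn := map_mem (lambda a) hn
      mul_add_neg_mem c _ hn := map_mem (rho c) hn }

section SubBrace

variable (N : AddSubgroup A) [IsLeftIdeal N]

theorem IsLeftIdeal.mul_mem {a b : A} (ha : a ∈ N) (hb : b ∈ N) : a * b ∈ N := by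
  simpa using N.add_mem ha (IsLeftIdeal.neg_add_mul_mem a hb)

variable [IsSkewBrace A]

theorem IsLeftIdeal.inv_mem {a : A} (ha : a ∈ N) : a⁻¹ ∈ N := by
  simpa [one_eq_zero] using IsLeftIdeal.neg_add_mul_mem (N := N) a⁻¹ ha

def mulSubgroup : Subgroup A where
  carrier := N
  mul_mem' := IsLeftIdeal.mul_mem N
  one_mem' := one_eq_zero (A := A) ▸ N.zero_mem
  inv_mem' := IsLeftIdeal.inv_mem N

instance : Group N := (mulSubgroup N).toGroup

instance : IsSkewBrace N := ⟨fun a b c => Subtype.ext (IsSkewBrace.mul_add (a : A) b c)⟩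

end SubBrace

instance [IsTwoSidedSkewBrace A] (N : AddSubgroup A) [IsLeftIdeal N] : IsTwoSidedSkewBrace N :=
  ⟨fun a b c => Subtype.ext (IsTwoSidedSkewBrace.add_mul (a : A) b c)⟩

section Quotient

variable [IsTwoSidedSkewBrace A] (N : AddSubgroup A) [IsIdeal N]

theorem neg_mul_add_add_mul_add (a b n m : A) :
    -(a * b) + (a + n) * (b + m) =
      lambda a m + (-(b + m) + rho (b + m) n + (b + m)) := by
  rw [IsTwoSidedSkewBrace.add_mul a n, IsSkewBrace.mul_add a b m]
  simp [add_assoc]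

/-- Its underlying setoid is the coset relation of `N`, so its quotient is `A ⧸ N` itself. -/
def quotientCon : Con A where
  toSetoid := QuotientAddGroup.leftRel N
  mul' {a a' b b'} ha hb := by
    rw [QuotientAddGroup.leftRel_apply] at *
    obtain ⟨n, hn, rfl⟩ : ∃ n ∈ N, a' = a + n := ⟨_, ha, (add_neg_cancel_left _ _).symm⟩
    obtain ⟨m, hm, rfl⟩ : ∃ m ∈ N, b' = b + m := ⟨_, hb, (add_neg_cancel_left _ _).symm⟩
    rw [neg_mul_add_add_mul_add]
    refine N.add_mem (IsLeftIdeal.neg_add_mul_mem a hm) ?_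
    simpa using IsIdeal.toNormal.conj_mem _ (IsIdeal.mul_add_neg_mem (b + m) hn) (-(b + m))

instance : Group (A ⧸ N) := inferInstanceAs (Group (quotientCon N).Quotient)

def mkMulHom : A →* A ⧸ N := (quotientCon N).mk'

@[simp]
theorem mkMulHom_apply (a : A) : mkMulHom N a = (a : A ⧸ N) := rfl

instance : IsTwoSidedSkewBrace (A ⧸ N) where
  mul_add x y z := by
    induction x using QuotientAddGroup.induction_on with | H a =>
    induction y using QuotientAddGroup.induction_on with | H b =>
    induction z using QuotientAddGroup.induction_on with | H c =>
    exact congrArg QuotientAddGroup.mk (IsSkewBrace.mul_add a b c)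
  add_mul x y z := by
    induction x using QuotientAddGroup.induction_on with | H a =>
    induction y using QuotientAddGroup.induction_on with | H b =>
    induction z using QuotientAddGroup.induction_on with | H c =>
    exact congrArg QuotientAddGroup.mk (IsTwoSidedSkewBrace.add_mul a b c)

theorem isSolvable_of_isIdeal [Group.IsSolvable N] [Group.IsSolvable (A ⧸ N)] :
    Group.IsSolvable A := by
  have : Group.IsSolvable (mulSubgroup N) := ‹Group.IsSolvable N›
  refine Group.isSolvable_of_ker_le_range (mulSubgroup N).subtype (mkMulHom N) fun a ha => ?_
  have ha : (a : A ⧸ N) = 0 := by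
    rw [MonoidHom.mem_ker, mkMulHom_apply] at ha
    rw [ha]
    exact congrArg QuotientAddGroup.mk one_eq_zero
  exact ⟨⟨a, (QuotientAddGroup.eq_zero_iff a).mp ha⟩, rfl⟩

end Quotient

end SkewBrace

open SkewBrace in
theorem IsTwoSidedSkewBrace.isSolvable (A : Type*) [iA : AddGroup A] [iM : Group A]
    [iB : IsTwoSidedSkewBrace A] [Finite A] [iS : Group.IsSolvable (Multiplicative A)] :
    Group.IsSolvable A := by
  induction A using Finite.induction_subsingleton_or_nontrivial generalizing iA iM iB iS with
  | hbase => infer_instance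
  | hstep A ih =>
    obtain ⟨H, hH, hbot, htop⟩ | ⟨p, hp, hA⟩ :=
      Group.IsSolvable.exists_characteristic_ne_bot_ne_top_or_isPGroup (G := Multiplicative A)
    · have := ih H.toAddSubgroup' (AddSubgroup.card_lt_card_of_ne_top (by simpa using htop))
      have := ih (A ⧸ H.toAddSubgroup')
        (QuotientAddGroup.card_lt_card_of_ne_bot (by simpa using hbot))
      exact isSolvable_of_isIdeal H.toAddSubgroup'
    · have := Fact.mk hp
      obtain ⟨n, hn⟩ := IsPGroup.iff_card.mp hA
      have := (IsPGroup.of_card (G := A) hn).isNilpotent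
      infer_instance

/-- If the additive group of a finite two-sided skew brace is solvable, then so is its
multiplicative group. -/
theorem finite_two_sided_skew_brace_add_solvable_imp_mul_solvable
    (A : Type*) [AddGroup A] [Group A] [Finite A]
    (hl : ∀ a b c : A, a * (b + c) = a * b + -a + a * c)
    (hr : ∀ a b c : A, (a + b) * c = a * c + -c + b * c)
    (hsolv : IsSolvable (Multiplicative A)) :
    IsSolvable A :=
  have : IsTwoSidedSkewBrace A := { mul_add := hl, add_mul := hr }
  IsTwoSidedSkewBrace.isSolvable A (iS := hsolv)
end

section
/- Let A be a skew brace. If the multiplicative group A_⊙ is abelian, then the additive group A_⊕ is metabelian (solvable of derived length at most 2). -/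
/-! The maps `λ a : x ↦ -a + a * x` are automorphisms of `(A, +)` and `a ↦ λ a` is a homomorphism
on `(A, *)`. In the semidirect product `(A, +) ⋊[λ] (A, *)` the graph `{(a, a)}` and the
complement `{(0, b)}` are both copies of `(A, *)`, hence abelian, and their product is the whole
group. By Itô's theorem a product of two abelian subgroups is metabelian, and `(A, +)` embeds into
the semidirect product. -/

open scoped Pointwise commutatorElement

section Commutator

variable {G : Type*} [Group G]

theorem commutatorElement_mul_left_of_commute {u v b : G} (h : Commute v b) :
    ⁅u * v, b⁆ = ⁅u, b⁆ :=
  calc ⁅u * v, b⁆ = u * (v * b * v⁻¹) * u⁻¹ * b⁻¹ := by simp only [commutatorElement_def]; group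
    _ = ⁅u, b⁆ := by rw [h.mul_inv_cancel, commutatorElement_def]

theorem commutatorElement_mul_right_of_commute {a u v : G} (h : Commute a v) :
    ⁅a, u * v⁆ = ⁅a, u⁆ :=
  calc ⁅a, u * v⁆ = a * u * (v * a⁻¹ * v⁻¹) * u⁻¹ := by simp only [commutatorElement_def]; group
    _ = ⁅a, u⁆ := by rw [h.symm.inv_right.mul_inv_cancel, commutatorElement_def]

theorem conj_commutatorElement_of_conj_eq_mul_left {g a α β y : G} (hg : Commute g y)
    (hβ : Commute β y) (h : g * a * g⁻¹ = α * β) : g * ⁅a, y⁆ * g⁻¹ = ⁅α, y⁆ := by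
  rw [conjugate_commutatorElement, h, hg.mul_inv_cancel, commutatorElement_mul_left_of_commute hβ]

theorem conj_commutatorElement_of_conj_eq_mul_right {g x b α β : G} (hg : Commute g x)
    (hα : Commute x α) (h : g * b * g⁻¹ = β * α) : g * ⁅x, b⁆ * g⁻¹ = ⁅x, β⁆ := by
  rw [conjugate_commutatorElement, h, hg.mul_inv_cancel, commutatorElement_mul_right_of_commute hα]

theorem commute_of_conj_eq_conj {x p q : G} (h : p⁻¹ * x * p = q⁻¹ * x * q) :
    Commute x (p * q⁻¹) :=
  calc x * (p * q⁻¹) = p * (p⁻¹ * x * p) * q⁻¹ := by group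
    _ = p * q⁻¹ * x := by rw [h]; group

end Commutator

namespace Subgroup

variable {G : Type*} [Group G] {A B : Subgroup G}

theorem coe_mul_coe_eq_univ_comm (hAB : (A : Set G) * (B : Set G) = Set.univ) :
    (B : Set G) * (A : Set G) = Set.univ := by
  rw [← inv_coe_set (H := A), ← inv_coe_set (H := B), ← mul_inv_rev, hAB, Set.inv_univ]

theorem exists_mem_mul_eq_of_coe_mul_coe_eq_univ (hAB : (A : Set G) * (B : Set G) = Set.univ)
    (g : G) : ∃ a ∈ A, ∃ b ∈ B, a * b = g :=
  Set.mem_mul.mp (hAB ▸ Set.mem_univ g)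

variable [IsMulCommutative A] [IsMulCommutative B]

theorem commute_commutatorElement_of_coe_mul_coe_eq_univ
    (hAB : (A : Set G) * (B : Set G) = Set.univ) {a a' b b' : G} (ha : a ∈ A) (ha' : a' ∈ A)
    (hb : b ∈ B) (hb' : b' ∈ B) :
    Commute ⁅a, b⁆ ⁅a', b'⁆ := by
  obtain ⟨α₁, hα₁, β₁, hβ₁, h₁⟩ :=
    exists_mem_mul_eq_of_coe_mul_coe_eq_univ hAB (b'⁻¹ * a * b'⁻¹⁻¹)
  obtain ⟨β₂, hβ₂, α₂, hα₂, h₂⟩ :=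
    exists_mem_mul_eq_of_coe_mul_coe_eq_univ (coe_mul_coe_eq_univ_comm hAB) (a'⁻¹ * b * a'⁻¹⁻¹)
  have e₁ : b'⁻¹ * ⁅a, b⁆ * b'⁻¹⁻¹ = ⁅α₁, b⁆ :=
    conj_commutatorElement_of_conj_eq_mul_left (setLike_mul_comm (inv_mem hb') hb)
      (setLike_mul_comm hβ₁ hb) h₁.symm
  have e₂ : a'⁻¹ * ⁅α₁, b⁆ * a'⁻¹⁻¹ = ⁅α₁, β₂⁆ :=
    conj_commutatorElement_of_conj_eq_mul_right (setLike_mul_comm (inv_mem ha') hα₁)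
      (setLike_mul_comm hα₁ hα₂) h₂.symm
  have e₃ : b'⁻¹ * ⁅a, β₂⁆ * b'⁻¹⁻¹ = ⁅α₁, β₂⁆ :=
    conj_commutatorElement_of_conj_eq_mul_left (setLike_mul_comm (inv_mem hb') hβ₂)
      (setLike_mul_comm hβ₁ hβ₂) h₁.symm
  have e₄ : a'⁻¹ * ⁅a, b⁆ * a'⁻¹⁻¹ = ⁅a, β₂⁆ :=
    conj_commutatorElement_of_conj_eq_mul_right (setLike_mul_comm (inv_mem ha') ha)
      (setLike_mul_comm ha hα₂) h₂.symm
  -- Conjugating by `b'⁻¹` then `a'⁻¹`, or in the other order, both give `⁅α₁, β₂⁆`.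
  have key : (b' * a')⁻¹ * ⁅a, b⁆ * (b' * a') = (a' * b')⁻¹ * ⁅a, b⁆ * (a' * b') := by
    calc (b' * a')⁻¹ * ⁅a, b⁆ * (b' * a') = a'⁻¹ * (b'⁻¹ * ⁅a, b⁆ * b'⁻¹⁻¹) * a'⁻¹⁻¹ := by group
      _ = b'⁻¹ * (a'⁻¹ * ⁅a, b⁆ * a'⁻¹⁻¹) * b'⁻¹⁻¹ := by rw [e₁, e₂, e₄, e₃]
      _ = (a' * b')⁻¹ * ⁅a, b⁆ * (a' * b') := by group
  have hc : ⁅a', b'⁆ = (a' * b') * (b' * a')⁻¹ := by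
    simp only [commutatorElement_def]; group
  rw [hc]
  exact commute_of_conj_eq_conj key.symm

theorem isMulCommutative_commutator_of_coe_mul_coe_eq_univ
    (hAB : (A : Set G) * (B : Set G) = Set.univ) : IsMulCommutative (⁅A, B⁆ : Subgroup G) := by
  refine isMulCommutative_closure ?_
  rintro _ ⟨a, ha, b, hb, rfl⟩ _ ⟨a', ha', b', hb', rfl⟩
  exact commute_commutatorElement_of_coe_mul_coe_eq_univ hAB ha ha' hb hb'

theorem normal_commutator_of_coe_mul_coe_eq_univ
    (hAB : (A : Set G) * (B : Set G) = Set.univ) : ⁅A, B⁆.Normal := by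
  have hA : A ≤ normalizer ((⁅A, B⁆ : Subgroup G) : Set G) := by
    refine le_normalizer_closure_iff.mpr ?_
    rintro g hg _ ⟨a, ha, b, hb, rfl⟩
    obtain ⟨β, hβ, α, hα, h⟩ :=
      exists_mem_mul_eq_of_coe_mul_coe_eq_univ (coe_mul_coe_eq_univ_comm hAB) (g * b * g⁻¹)
    rw [conj_commutatorElement_of_conj_eq_mul_right (setLike_mul_comm hg ha)
      (setLike_mul_comm ha hα) h.symm]
    exact commutator_mem_commutator ha hβ
  have hB : B ≤ normalizer ((⁅A, B⁆ : Subgroup G) : Set G) := by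
    refine le_normalizer_closure_iff.mpr ?_
    rintro g hg _ ⟨a, ha, b, hb, rfl⟩
    obtain ⟨α, hα, β, hβ, h⟩ := exists_mem_mul_eq_of_coe_mul_coe_eq_univ hAB (g * a * g⁻¹)
    rw [conj_commutatorElement_of_conj_eq_mul_left (setLike_mul_comm hg hb)
      (setLike_mul_comm hβ hb) h.symm]
    exact commutator_mem_commutator hα hb
  refine normalizer_eq_top_iff.mp (eq_top_iff.mpr fun g _ => ?_)
  obtain ⟨a, ha, b, hb, rfl⟩ := exists_mem_mul_eq_of_coe_mul_coe_eq_univ hAB g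
  exact mul_mem (hA ha) (hB hb)

theorem commutator_le_commutator_of_coe_mul_coe_eq_univ
    (hAB : (A : Set G) * (B : Set G) = Set.univ) : _root_.commutator G ≤ ⁅A, B⁆ := by
  have := normal_commutator_of_coe_mul_coe_eq_univ hAB
  let π := QuotientGroup.mk' ⁅A, B⁆
  have hAA {x y : G} (hx : x ∈ A) (hy : y ∈ A) : Commute (π x) (π y) :=
    Commute.map (setLike_mul_comm hx hy) π
  have hBB {x y : G} (hx : x ∈ B) (hy : y ∈ B) : Commute (π x) (π y) :=
    Commute.map (setLike_mul_comm hx hy) π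
  have hAB' {x y : G} (hx : x ∈ A) (hy : y ∈ B) : Commute (π x) (π y) := by
    rw [← commutatorElement_eq_one_iff_commute, ← map_commutatorElement, QuotientGroup.mk'_apply,
      QuotientGroup.eq_one_iff]
    exact commutator_mem_commutator hx hy
  rw [_root_.commutator_def, commutator_le]
  rintro g - h -
  obtain ⟨a₁, ha₁, b₁, hb₁, rfl⟩ := exists_mem_mul_eq_of_coe_mul_coe_eq_univ hAB g
  obtain ⟨a₂, ha₂, b₂, hb₂, rfl⟩ := exists_mem_mul_eq_of_coe_mul_coe_eq_univ hAB h
  rw [← QuotientGroup.eq_one_iff, ← QuotientGroup.mk'_apply, map_commutatorElement,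
    commutatorElement_eq_one_iff_commute, map_mul, map_mul]
  exact ((hAA ha₁ ha₂).mul_right (hAB' ha₁ hb₂)).mul_left
    ((hAB' ha₂ hb₁).symm.mul_right (hBB hb₁ hb₂))

theorem derivedSeries_two_eq_bot_of_coe_mul_coe_eq_univ
    (hAB : (A : Set G) * (B : Set G) = Set.univ) : derivedSeries G 2 = ⊥ := by
  have := isMulCommutative_commutator_of_coe_mul_coe_eq_univ hAB
  have h₁ := commutator_le_commutator_of_coe_mul_coe_eq_univ hAB
  refine le_bot_iff.mp ?_
  calc derivedSeries G 2 = ⁅_root_.commutator G, _root_.commutator G⁆ := rfl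
    _ ≤ ⁅⁅A, B⁆, ⁅A, B⁆⁆ := commutator_mono h₁ h₁
    _ = ⊥ := commutator_self_eq_bot_iff.mpr this

end Subgroup

def IsSkewBrace_s9 (A : Type*) [AddGroup A] [Group A] : Prop :=
  ∀ a b c : A, a * (b + c) = a * b + -a + a * c

namespace IsSkewBrace_s9

variable {A : Type*} [AddGroup A] [Group A]

theorem mul_zero (h : IsSkewBrace_s9 A) (a : A) : a * 0 = a := by
  have h₀ := h a 0 0
  rw [add_zero, add_assoc, left_eq_add, neg_add_eq_zero] at h₀
  exact h₀.symm

theorem zero_eq_one (h : IsSkewBrace_s9 A) : (0 : A) = 1 := by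
  simpa using h.mul_zero 1

def lambda (h : IsSkewBrace_s9 A) (a : A) : A →+ A :=
  AddMonoidHom.mk' (fun x => -a + a * x) fun x y => by simp only [h a x y, add_assoc]

theorem lambda_apply (h : IsSkewBrace_s9 A) (a x : A) : h.lambda a x = -a + a * x := rfl

theorem lambda_one (h : IsSkewBrace_s9 A) (x : A) : h.lambda 1 x = x := by
  rw [lambda_apply, one_mul, ← h.zero_eq_one, neg_zero, zero_add]

theorem lambda_mul (h : IsSkewBrace_s9 A) (a b x : A) :
    h.lambda (a * b) x = h.lambda a (h.lambda b x) := by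
  rw [lambda_apply h b, map_add, map_neg]
  simp only [lambda_apply, mul_assoc, neg_add_rev, neg_neg, add_assoc, add_neg_cancel_left]

def lambdaMulAut (h : IsSkewBrace_s9 A) : A →* MulAut (Multiplicative A) where
  toFun a :=
    { toFun := fun x => .ofAdd (h.lambda a x.toAdd)
      invFun := fun x => .ofAdd (h.lambda a⁻¹ x.toAdd)
      left_inv x := by simp only [toAdd_ofAdd, ← lambda_mul, inv_mul_cancel, lambda_one]; rfl
      right_inv x := by simp only [toAdd_ofAdd, ← lambda_mul, mul_inv_cancel, lambda_one]; rfl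
      map_mul' x y := by simp only [toAdd_mul, map_add, ofAdd_add] }
  map_one' := by ext x; exact congrArg _ (h.lambda_one x.toAdd)
  map_mul' a b := by ext x; exact congrArg _ (h.lambda_mul a b x.toAdd)

def graph (h : IsSkewBrace_s9 A) : A →* Multiplicative A ⋊[h.lambdaMulAut] A where
  toFun a := ⟨.ofAdd a, a⟩
  map_one' := SemidirectProduct.ext (congrArg Multiplicative.ofAdd h.zero_eq_one.symm :) rfl
  map_mul' a b := SemidirectProduct.ext (congrArg Multiplicative.ofAdd
    (add_neg_cancel_left a (a * b)).symm :) rfl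

theorem coe_range_graph_mul_coe_range_inr (h : IsSkewBrace_s9 A) :
    (h.graph.range : Set (Multiplicative A ⋊[h.lambdaMulAut] A)) *
      ((SemidirectProduct.inr.range : Subgroup (Multiplicative A ⋊[h.lambdaMulAut] A)) : Set _) =
      Set.univ := by
  refine Set.eq_univ_of_forall fun g => Set.mem_mul.mpr
    ⟨h.graph g.left.toAdd, ⟨_, rfl⟩, .inr (g.left.toAdd⁻¹ * g.right), ⟨_, rfl⟩, ?_⟩
  refine SemidirectProduct.ext ?_ (mul_inv_cancel_left _ _)
  rw [SemidirectProduct.mul_left, SemidirectProduct.left_inr, map_one, mul_one]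
  rfl

end IsSkewBrace_s9

theorem derivedSeries_eq_bot_of_injective {G H : Type*} [Group G] [Group H] {f : G →* H}
    (hf : Function.Injective f) {n : ℕ} (h : derivedSeries H n = ⊥) : derivedSeries G n = ⊥ := by
  have hmap := map_derivedSeries_le_derivedSeries f n
  rw [h, le_bot_iff] at hmap
  exact (Subgroup.map_eq_bot_iff_of_injective _ hf).mp hmap

/-- If the multiplicative group of a skew brace is abelian, then its additive group is
metabelian (solvable of derived length at most `2`). -/
theorem skew_brace_mul_abelian_imp_add_metabelian
    (A : Type*) [AddGroup A] [Group A]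
    (hl : ∀ a b c : A, a * (b + c) = a * b + -a + a * c)
    (hcomm : ∀ a b : A, a * b = b * a) :
    derivedSeries (Multiplicative A) 2 = ⊥ := by
  have : IsMulCommutative A := ⟨⟨hcomm⟩⟩
  exact derivedSeries_eq_bot_of_injective SemidirectProduct.inl_injective
    (Subgroup.derivedSeries_two_eq_bot_of_coe_mul_coe_eq_univ
      (IsSkewBrace_s9.coe_range_graph_mul_coe_range_inr hl))
end
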